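/- Consistency of the entropy conservative numerical flux for relativistic hydrodynamics: fix γ > 1 and a state W = (ρ, ux, uy, uz, p) with ρ > 0, p > 0, ux² + uy² + uz² < 1. Define Γ = 1/√(1 − |u|²), β = ρ/p, m = Γ·(ux, uy, uz), and h = 1 + (γ/(γ−1))·(p/ρ). Let the two-point entropy conservative flux F̃ˣ(W_L, W_R) be given in terms of arithmetic means z̄ = (z_L + z_R)/2 of ρ, β, Γ, m_x, m_y, m_z, the logarithmic means ρ^ln = L(ρ_L, ρ_R), β^ln = L(β_L, β_R), and k = 1/((γ−1)β^ln) + 1, by: F̃₅ = −Γ̄·(k ρ^ln m̄_x + m̄_x ρ̄/β̄)/(m̄_x² + m̄_y² + m̄_z² − Γ̄²), F̃₁ = ρ^ln m̄_x, F̃₂ = (m̄_x/Γ̄)·F̃₅ + ρ̄/β̄, F̃₃ = (m̄_y/Γ̄)·F̃₅, F̃₄ = (m̄_z/Γ̄)·F̃₅. Then for equal states, F̃ˣ(W, W) = (ρΓux, ρhΓ²ux² + p, ρhΓ²uxuy, ρhΓ²uxuz, ρhΓ²ux), i.e., F̃ˣ is consistent with the exact x-direction flux fˣ of the relativistic Euler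 equations. -/

import Mathlib

/-- Primitive state of relativistic hydrodynamics: `(ρ, uₓ, u_y, u_z, p)`. -/
structure RHDState where
  rho : ℝ
  ux : ℝ
  uy : ℝ
  uz : ℝ
  p : ℝ

/-- Logarithmic mean, extended on the diagonal by `L(a,a) = a`. -/
noncomputable def logMean (a b : ℝ) : ℝ :=
  if a = b then a else (a - b) / (Real.log a - Real.log b)

/-- Lorentz factor `Γ = 1/√(1 − |u|²)`. -/
noncomputable def Gam (W : RHDState) : ℝ :=
  1 / Real.sqrt (1 - (W.ux ^ 2 + W.uy ^ 2 + W.uz ^ 2))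

/-- `β = ρ/p`. -/
noncomputable def betaOf (W : RHDState) : ℝ := W.rho / W.p

/-- In the flux formula `m` denotes `Γ·u`. -/
noncomputable def mx (W : RHDState) : ℝ := Gam W * W.ux
noncomputable def my (W : RHDState) : ℝ := Gam W * W.uy
noncomputable def mz (W : RHDState) : ℝ := Gam W * W.uz

/-- Two-point entropy conservative numerical flux `F̃ˣ(W_L, W_R)` for relativistic
hydrodynamics. -/
noncomputable def ecFluxX (γ : ℝ) (L R : RHDState) : Fin 5 → ℝ :=
  let ρln := logMean L.rho R.rho
  let βln := logMean (betaOf L) (betaOf R)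
  let k := 1 / ((γ - 1) * βln) + 1
  let ρb := (L.rho + R.rho) / 2
  let βb := (betaOf L + betaOf R) / 2
  let Γb := (Gam L + Gam R) / 2
  let mxb := (mx L + mx R) / 2
  let myb := (my L + my R) / 2
  let mzb := (mz L + mz R) / 2
  let F5 := -Γb * (k * ρln * mxb + mxb * ρb / βb) / (mxb ^ 2 + myb ^ 2 + mzb ^ 2 - Γb ^ 2)
  ![ρln * mxb,
    (mxb / Γb) * F5 + ρb / βb,
    (myb / Γb) * F5,
    (mzb / Γb) * F5,
    F5]

/-- Consistency of the entropy conservative flux: at equal admissible states it reduces to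
the exact `x`-direction flux of the relativistic Euler equations,
`fˣ = (ρΓuₓ, ρhΓ²uₓ² + p, ρhΓ²uₓu_y, ρhΓ²uₓu_z, ρhΓ²uₓ)`. -/
theorem ecFluxX_consistent (γ : ℝ) (hγ : 1 < γ) (W : RHDState)
    (hρ : 0 < W.rho) (hp : 0 < W.p)
    (hu : W.ux ^ 2 + W.uy ^ 2 + W.uz ^ 2 < 1) :
    ecFluxX γ W W =
      ![W.rho * Gam W * W.ux,
        W.rho * (1 + (γ / (γ - 1)) * (W.p / W.rho)) * (Gam W) ^ 2 * W.ux ^ 2 + W.p,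
        W.rho * (1 + (γ / (γ - 1)) * (W.p / W.rho)) * (Gam W) ^ 2 * W.ux * W.uy,
        W.rho * (1 + (γ / (γ - 1)) * (W.p / W.rho)) * (Gam W) ^ 2 * W.ux * W.uz,
        W.rho * (1 + (γ / (γ - 1)) * (W.p / W.rho)) * (Gam W) ^ 2 * W.ux] := by
  have hs0 : 0 < 1 - (W.ux ^ 2 + W.uy ^ 2 + W.uz ^ 2) := by linarith
  have hsq : Real.sqrt (1 - (W.ux ^ 2 + W.uy ^ 2 + W.uz ^ 2)) ^ 2
      = 1 - (W.ux ^ 2 + W.uy ^ 2 + W.uz ^ 2) := Real.sq_sqrt hs0.le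
  have hspos : 0 < Real.sqrt (1 - (W.ux ^ 2 + W.uy ^ 2 + W.uz ^ 2)) := Real.sqrt_pos.mpr hs0
  have hGpos : 0 < Gam W := by unfold Gam; positivity
  have hG2 : Gam W ^ 2 * (1 - (W.ux ^ 2 + W.uy ^ 2 + W.uz ^ 2)) = 1 := by
    unfold Gam
    rw [div_pow, one_pow, hsq]
    field_simp
  have hg : γ - 1 ≠ 0 := by linarith
  have hG0 : Gam W ≠ 0 := hGpos.ne'
  have hr0 : W.rho ≠ 0 := hρ.ne'
  have hp0 : W.p ≠ 0 := hp.ne'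
  have hden : ((Gam W * W.ux + Gam W * W.ux) / 2) ^ 2 + ((Gam W * W.uy + Gam W * W.uy) / 2) ^ 2
      + ((Gam W * W.uz + Gam W * W.uz) / 2) ^ 2 - ((Gam W + Gam W) / 2) ^ 2 = -1 := by
    linear_combination -hG2
  simp only [ecFluxX, logMean, betaOf, mx, my, mz, if_pos rfl, ite_true]
  rw [hden]
  have hF5 : -((Gam W + Gam W) / 2) *
      ((1 / ((γ - 1) * (W.rho / W.p)) + 1) * W.rho * ((Gam W * W.ux + Gam W * W.ux) / 2) +
        (Gam W * W.ux + Gam W * W.ux) / 2 * ((W.rho + W.rho) / 2) /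
          ((W.rho / W.p + W.rho / W.p) / 2)) / (-1 : ℝ)
      = W.rho * (1 + γ / (γ - 1) * (W.p / W.rho)) * Gam W ^ 2 * W.ux := by
    field_simp
    ring
  rw [hF5]
  simp only [Matrix.vecCons, Fin.cons_inj]
  refine ⟨by ring, by field_simp, by field_simp, by field_simp, trivial⟩
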